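/- Suppose for every regular α < κ, Q_α = Col(α, α⁺) = {f : f is a function from some ξ < α into α⁺}, and P_κ is the full-support product/iteration of these collapses, with κ measurable witnessed by normal measure U. Then for any condition p ∈ P_κ there exist A* ∈ U, τ* < κ, and p* ≥ p such that for every β ∈ A*, p*↾β forces dom(p*(β)) = τ*. -/

import Mathlib

/-- A coordinate `β < κ` is a regular cardinal. -/
def IsRegularCardOrd (β : Ordinal) : Prop :=
  β = β.card.ord ∧ β.card.IsRegular

/-- A condition of the full-support iteration of `Col(α, α⁺)`: at each regular `α < κ`,
a partial function from some `ξ < α` into `α⁺`, coded by its domain ordinal `d α` and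
values `v α`. -/
def ColValid (κ : Ordinal) (d : Ordinal → Ordinal) (v : Ordinal → Ordinal → Ordinal) : Prop :=
  ∀ β, β < κ → (IsRegularCardOrd β →
    d β < β ∧ ∀ i, i < d β → v β i < (Order.succ β.card).ord) ∧
    (¬IsRegularCardOrd β → d β = 0)

/-- Coordinatewise extension of conditions. -/
def ColExt (κ : Ordinal) (pd : Ordinal → Ordinal) (pv : Ordinal → Ordinal → Ordinal)
    (qd : Ordinal → Ordinal) (qv : Ordinal → Ordinal → Ordinal) : Prop :=
  ∀ β, β < κ → pd β ≤ qd β ∧ ∀ i, i < pd β → qv β i = pv β i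

/-! The domain map `β ↦ dom p(β)` is regressive on the regular cardinals below `κ`, a set in
`U`, so normality makes it constant on a set in `U`; the condition `p` itself then serves
as `p*`, and the constant value lies below `κ` because it is below some `β < κ`. -/

theorem IsRegularCardOrd.ne_zero {β : Ordinal} (h : IsRegularCardOrd β) : β ≠ 0 := by
  rintro rfl
  exact Cardinal.aleph0_ne_zero (le_antisymm (by simpa using h.2.aleph0_le) zero_le)

theorem ColValid.dom_lt {κ : Ordinal} {d : Ordinal → Ordinal} {v : Ordinal → Ordinal → Ordinal}
    (hp : ColValid κ d v) {β : Ordinal} (hβ : β < κ) (hreg : IsRegularCardOrd β) : d β < β :=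
  ((hp β hβ).1 hreg).1

theorem colExt_refl (κ : Ordinal) (d : Ordinal → Ordinal) (v : Ordinal → Ordinal → Ordinal) :
    ColExt κ d v d v :=
  fun _ _ => ⟨le_rfl, fun _ _ => rfl⟩

theorem stmt17_general (κ : Ordinal)
    (U : Set (Set Ordinal))
    (hne : (∅ : Set Ordinal) ∉ U)
    (hnormal : ∀ f : Ordinal → Ordinal, ∀ A ∈ U, (∀ α ∈ A, α ≠ 0 → f α < α) →
      ∃ B ∈ U, B ⊆ A ∧ ∃ c, ∀ α ∈ B, α ≠ 0 → f α = c)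
    (hregU : {β | β < κ ∧ IsRegularCardOrd β} ∈ U)
    (pd : Ordinal → Ordinal) (pv : Ordinal → Ordinal → Ordinal)
    (hp : ColValid κ pd pv) :
    ∃ A ∈ U, ∃ τ, τ < κ ∧ ∃ qd qv, ColValid κ qd qv ∧ ColExt κ pd pv qd qv ∧
      ∀ β ∈ A, qd β = τ := by
  obtain ⟨B, hBU, hBreg, τ, hτ⟩ :=
    hnormal pd _ hregU fun α hα _ => hp.dom_lt hα.1 hα.2
  have hconst : ∀ β ∈ B, pd β = τ := fun β hβ => hτ β hβ (hBreg hβ).2.ne_zero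
  obtain ⟨β₀, hβ₀⟩ := Set.nonempty_iff_ne_empty.2 fun h => hne (h ▸ hBU)
  have hτκ : τ < κ := calc
    τ = pd β₀ := (hconst β₀ hβ₀).symm
    _ < β₀ := hp.dom_lt (hBreg hβ₀).1 (hBreg hβ₀).2
    _ < κ := (hBreg hβ₀).1
  exact ⟨B, hBU, τ, hτκ, pd, pv, hp, colExt_refl κ pd pv, hconst⟩

/-- Domain stabilization (Claim 2 of the paper): if `κ` is measurable with normal measure
`U` and `p` is a condition of the full-support iteration of `Col(α, α⁺)` for regular
`α < κ`, then there are `A* ∈ U`, `τ* < κ` and `p* ≥ p` such that `dom(p*(β)) = τ*` for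
every `β ∈ A*`. -/
theorem stmt17 (κ : Ordinal)
    (U : Set (Set Ordinal))
    (hsub : ∀ A ∈ U, A ⊆ Set.Iio κ)
    (htop : Set.Iio κ ∈ U)
    (hne : (∅ : Set Ordinal) ∉ U)
    (hinter : ∀ A ∈ U, ∀ B ∈ U, A ∩ B ∈ U)
    (hup : ∀ A ∈ U, ∀ B : Set Ordinal, A ⊆ B → B ⊆ Set.Iio κ → B ∈ U)
    (hultra : ∀ A : Set Ordinal, A ⊆ Set.Iio κ → A ∈ U ∨ (Set.Iio κ \ A) ∈ U)
    (hcomplete : ∀ (ι : Type) (_ : Cardinal.mk ι < κ.card) (f : ι → Set Ordinal),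
      (∀ i, f i ∈ U) → ((⋂ i, f i) ∩ Set.Iio κ) ∈ U)
    (hnormal : ∀ f : Ordinal → Ordinal, ∀ A ∈ U, (∀ α ∈ A, α ≠ 0 → f α < α) →
      ∃ B ∈ U, B ⊆ A ∧ ∃ c, ∀ α ∈ B, α ≠ 0 → f α = c)
    (hregU : {β | β < κ ∧ IsRegularCardOrd β} ∈ U)
    (pd : Ordinal → Ordinal) (pv : Ordinal → Ordinal → Ordinal)
    (hp : ColValid κ pd pv) :
    ∃ A ∈ U, ∃ τ, τ < κ ∧ ∃ qd qv, ColValid κ qd qv ∧ ColExt κ pd pv qd qv ∧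
      ∀ β ∈ A, qd β = τ :=
  stmt17_general κ U hne hnormal hregU pd pv hp
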